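/- Let C₋ ∈ ℂ^{m×n}, C₊ = 0, Ω₋ ∈ ℂ^{n×n} Hermitian, Ω₊ ∈ ℂ^{n×n} symmetric, and suppose C₋·Ω₋ = 0 and C₋·Ω₊ = 0 (the QND-interaction condition [L,H] = 0 with C₊ = 0). Then for every s ∈ ℂ such that sI_{2n} − 𝒜, sI_m + (1/2)C₋C₋†, and sI_m + (1/2)conj(C₋)C₋ᵀ are invertible, the annihilation–creation form transfer matrix is block diagonal: Ξ[s] = diag( (sI_m − (1/2)C₋C₋†)(sI_m + (1/2)C₋C₋†)⁻¹ , (sI_m − (1/2)conj(C₋)C₋ᵀ)(sI_m + (1/2)conj(C₋)C₋ᵀ)⁻¹ ); consequently quantum BAE measurements are realized. -/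
import Mathlib


open Matrix

noncomputable section

namespace LQS

/-- Entrywise complex conjugation of a matrix. -/
def conjMat {k l : ℕ} (X : Matrix (Fin k) (Fin l) ℂ) : Matrix (Fin k) (Fin l) ℂ :=
  X.map (starRingEnd ℂ)

/-- Doubled-up matrix Δ(U,V) = [[U, V],[conj V, conj U]]. -/
def deltaUp {k r : ℕ} (U V : Matrix (Fin k) (Fin r) ℂ) :
    Matrix (Fin k ⊕ Fin k) (Fin r ⊕ Fin r) ℂ :=
  fromBlocks U V (conjMat V) (conjMat U)

/-- J_k = diag(I_k, −I_k). -/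
def Jdiag (k : ℕ) : Matrix (Fin k ⊕ Fin k) (Fin k ⊕ Fin k) ℂ :=
  fromBlocks 1 0 0 (-1)

/-- 𝒞♭ = J_n·𝒞†·J_m for 𝒞 = Δ(C₋,C₊). -/
def flatC {m n : ℕ} (Cm Cp : Matrix (Fin m) (Fin n) ℂ) :
    Matrix (Fin n ⊕ Fin n) (Fin m ⊕ Fin m) ℂ :=
  Jdiag n * (deltaUp Cm Cp)ᴴ * Jdiag m

/-- 𝒜 = −i·J_n·Ω − (1/2)·𝒞♭·𝒞. -/
def calA {m n : ℕ} (Cm Cp : Matrix (Fin m) (Fin n) ℂ) (Om Op : Matrix (Fin n) (Fin n) ℂ) :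
    Matrix (Fin n ⊕ Fin n) (Fin n ⊕ Fin n) ℂ :=
  (-Complex.I) • (Jdiag n * deltaUp Om Op) - (1/2 : ℂ) • (flatC Cm Cp * deltaUp Cm Cp)

/-- Annihilation–creation form transfer matrix Ξ[s] = I − 𝒞(sI − 𝒜)⁻¹𝒞♭
(identity scattering matrix). -/
def Xi {m n : ℕ} (Cm Cp : Matrix (Fin m) (Fin n) ℂ) (Om Op : Matrix (Fin n) (Fin n) ℂ)
    (s : ℂ) : Matrix (Fin m ⊕ Fin m) (Fin m ⊕ Fin m) ℂ :=
  1 - deltaUp Cm Cp *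
    (s • (1 : Matrix (Fin n ⊕ Fin n) (Fin n ⊕ Fin n) ℂ) - calA Cm Cp Om Op)⁻¹ *
    flatC Cm Cp

end LQS

open LQS Matrix

section Aux

lemma conjMat_zero {k l : ℕ} : conjMat (0 : Matrix (Fin k) (Fin l) ℂ) = 0 := by
  simp [conjMat]

lemma conjMat_mul {k l r : ℕ} (A : Matrix (Fin k) (Fin l) ℂ) (B : Matrix (Fin l) (Fin r) ℂ) :
    conjMat (A * B) = conjMat A * conjMat B := by
  simp [conjMat, Matrix.map_mul]

lemma conjMat_conjTranspose {k l : ℕ} (A : Matrix (Fin k) (Fin l) ℂ) :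
    (conjMat A)ᴴ = Aᵀ := by
  ext i j; simp [conjMat, conjTranspose_apply]

lemma fromBlocks_sub' {k l : ℕ} (A A' : Matrix (Fin k) (Fin k) ℂ) (B B' : Matrix (Fin k) (Fin l) ℂ)
    (C C' : Matrix (Fin l) (Fin k) ℂ) (D D' : Matrix (Fin l) (Fin l) ℂ) :
    fromBlocks A B C D - fromBlocks A' B' C' D' =
      fromBlocks (A - A') (B - B') (C - C') (D - D') := by
  ext (i | i) (j | j) <;> simp [fromBlocks]

end Aux

/-- QND interaction with C₊ = 0: the annihilation–creation transfer matrix is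
block diagonal with explicit all-pass diagonal blocks; BAE measurements are realized. -/
theorem stmt_12 {m n : ℕ} (hm : 1 ≤ m) (hn : 1 ≤ n)
    (Cm : Matrix (Fin m) (Fin n) ℂ)
    (Om Op : Matrix (Fin n) (Fin n) ℂ)
    (hOmH : Omᴴ = Om) (hOpS : Opᵀ = Op)
    (h1 : Cm * Om = 0) (h2 : Cm * Op = 0) :
    ∀ s : ℂ,
      IsUnit (s • (1 : Matrix (Fin n ⊕ Fin n) (Fin n ⊕ Fin n) ℂ)
        - calA Cm (0 : Matrix (Fin m) (Fin n) ℂ) Om Op) →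
      IsUnit (s • (1 : Matrix (Fin m) (Fin m) ℂ) + (1/2 : ℂ) • (Cm * Cmᴴ)) →
      IsUnit (s • (1 : Matrix (Fin m) (Fin m) ℂ) + (1/2 : ℂ) • (conjMat Cm * Cmᵀ)) →
      Xi Cm (0 : Matrix (Fin m) (Fin n) ℂ) Om Op s =
        fromBlocks
          ((s • (1 : Matrix (Fin m) (Fin m) ℂ) - (1/2 : ℂ) • (Cm * Cmᴴ)) *
            (s • (1 : Matrix (Fin m) (Fin m) ℂ) + (1/2 : ℂ) • (Cm * Cmᴴ))⁻¹)
          0 0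
          ((s • (1 : Matrix (Fin m) (Fin m) ℂ) - (1/2 : ℂ) • (conjMat Cm * Cmᵀ)) *
            (s • (1 : Matrix (Fin m) (Fin m) ℂ) + (1/2 : ℂ) • (conjMat Cm * Cmᵀ))⁻¹) := by
  intro s hA hP hQ
  set C : Matrix (Fin m ⊕ Fin m) (Fin n ⊕ Fin n) ℂ := deltaUp Cm 0 with hCdef
  set Cf : Matrix (Fin n ⊕ Fin n) (Fin m ⊕ Fin m) ℂ := flatC Cm 0 with hCfdef
  set P := s • (1 : Matrix (Fin m) (Fin m) ℂ) + (1/2 : ℂ) • (Cm * Cmᴴ) with hPdef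
  set Q := s • (1 : Matrix (Fin m) (Fin m) ℂ) + (1/2 : ℂ) • (conjMat Cm * Cmᵀ) with hQdef
  set P' := s • (1 : Matrix (Fin m) (Fin m) ℂ) - (1/2 : ℂ) • (Cm * Cmᴴ) with hP'def
  set Q' := s • (1 : Matrix (Fin m) (Fin m) ℂ) - (1/2 : ℂ) • (conjMat Cm * Cmᵀ) with hQ'def
  set A := s • (1 : Matrix (Fin n ⊕ Fin n) (Fin n ⊕ Fin n) ℂ)
      - calA Cm (0 : Matrix (Fin m) (Fin n) ℂ) Om Op with hAdef
  set B := fromBlocks P (0 : Matrix (Fin m) (Fin m) ℂ) (0 : Matrix (Fin m) (Fin m) ℂ) Q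
    with hBdef
  -- concrete block forms
  have hC : C = fromBlocks Cm 0 0 (conjMat Cm) := by
    rw [hCdef]; unfold deltaUp; rw [conjMat_zero]
  have hCf : Cf = fromBlocks Cmᴴ 0 0 Cmᵀ := by
    rw [hCfdef]; unfold flatC Jdiag deltaUp
    rw [conjMat_zero]
    simp [fromBlocks_conjTranspose, fromBlocks_multiply, conjMat_conjTranspose]
  have hCCf : C * Cf = fromBlocks (Cm * Cmᴴ) 0 0 (conjMat Cm * Cmᵀ) := by
    rw [hC, hCf]; simp [fromBlocks_multiply]
  -- C kills the Hamiltonian part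
  have hkill : C * (Jdiag n * deltaUp Om Op) = 0 := by
    have h1' : conjMat Cm * conjMat Om = 0 := by rw [← conjMat_mul, h1, conjMat_zero]
    have h2' : conjMat Cm * conjMat Op = 0 := by rw [← conjMat_mul, h2, conjMat_zero]
    rw [hC]; unfold Jdiag deltaUp
    simp [fromBlocks_multiply, h1, h2, h1', h2', Matrix.mul_neg]
  -- B as a sum
  have hB : B = s • (1 : Matrix (Fin m ⊕ Fin m) (Fin m ⊕ Fin m) ℂ) + (1/2 : ℂ) • (C * Cf) := by
    rw [hBdef, hCCf, hPdef, hQdef, show (1 : Matrix (Fin m ⊕ Fin m) (Fin m ⊕ Fin m) ℂ) =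
      fromBlocks 1 0 0 1 from (fromBlocks_one).symm, fromBlocks_smul, fromBlocks_smul,
      fromBlocks_add]
    simp
  -- intertwining relation  C * A = B * C
  have hinter : C * A = B * C := by
    rw [hAdef, Matrix.mul_sub, Matrix.mul_smul, Matrix.mul_one]
    unfold calA
    rw [Matrix.mul_sub, Matrix.mul_smul, Matrix.mul_smul, hkill, smul_zero, zero_sub,
      sub_neg_eq_add, ← hCfdef, ← hCdef, ← Matrix.mul_assoc, hB, Matrix.add_mul,
      Matrix.smul_mul, Matrix.smul_mul, Matrix.one_mul]
  -- invertibility facts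
  have hPd := (Matrix.isUnit_iff_isUnit_det _).mp hP
  have hQd := (Matrix.isUnit_iff_isUnit_det _).mp hQ
  have hAd := (Matrix.isUnit_iff_isUnit_det _).mp hA
  have hPP : P * P⁻¹ = 1 := Matrix.mul_nonsing_inv _ hPd
  have hPP' : P⁻¹ * P = 1 := Matrix.nonsing_inv_mul _ hPd
  have hQQ : Q * Q⁻¹ = 1 := Matrix.mul_nonsing_inv _ hQd
  have hQQ' : Q⁻¹ * Q = 1 := Matrix.nonsing_inv_mul _ hQd
  have hAA : A * A⁻¹ = 1 := Matrix.mul_nonsing_inv _ hAd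
  have hBmul : B * fromBlocks P⁻¹ 0 0 Q⁻¹ = 1 := by
    rw [hBdef, fromBlocks_multiply]; simp [hPP, hQQ]
  have hBmul' : fromBlocks P⁻¹ 0 0 Q⁻¹ * B = 1 := by
    rw [hBdef, fromBlocks_multiply]; simp [hPP', hQQ']
  -- C * A⁻¹ = B⁻¹ * C
  have hCA : C * A⁻¹ = fromBlocks P⁻¹ 0 0 Q⁻¹ * C := by
    have h : B * (C * A⁻¹) = C := by
      rw [← Matrix.mul_assoc, ← hinter, Matrix.mul_assoc, hAA, Matrix.mul_one]
    calc C * A⁻¹ = (fromBlocks P⁻¹ 0 0 Q⁻¹ * B) * (C * A⁻¹) := by rw [hBmul', Matrix.one_mul]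
      _ = fromBlocks P⁻¹ 0 0 Q⁻¹ * (B * (C * A⁻¹)) := by rw [Matrix.mul_assoc]
      _ = fromBlocks P⁻¹ 0 0 Q⁻¹ * C := by rw [h]
  -- commuting the inverse past the numerator
  have hcP : P * P' = P' * P := by
    rw [hPdef, hP'def]
    noncomm_ring
    module
  have hcQ : Q * Q' = Q' * Q := by
    rw [hQdef, hQ'def]
    noncomm_ring
    module
  have hPswap : P⁻¹ * P' = P' * P⁻¹ := by
    have e1 : P⁻¹ * (P * P') * P⁻¹ = P' * P⁻¹ := by
      rw [← Matrix.mul_assoc, hPP', Matrix.one_mul]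
    have e2 : P⁻¹ * (P' * P) * P⁻¹ = P⁻¹ * P' := by
      rw [← Matrix.mul_assoc, Matrix.mul_assoc (P⁻¹ * P'), hPP, Matrix.mul_one]
    rw [← e2, ← hcP, e1]
  have hQswap : Q⁻¹ * Q' = Q' * Q⁻¹ := by
    have e1 : Q⁻¹ * (Q * Q') * Q⁻¹ = Q' * Q⁻¹ := by
      rw [← Matrix.mul_assoc, hQQ', Matrix.one_mul]
    have e2 : Q⁻¹ * (Q' * Q) * Q⁻¹ = Q⁻¹ * Q' := by
      rw [← Matrix.mul_assoc, Matrix.mul_assoc (Q⁻¹ * Q'), hQQ, Matrix.mul_one]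
    rw [← e2, ← hcQ, e1]
  have hblkP : (1 : Matrix (Fin m) (Fin m) ℂ) - P⁻¹ * (Cm * Cmᴴ) = P' * P⁻¹ := by
    rw [← hPswap]
    have : P' = P - Cm * Cmᴴ := by rw [hPdef, hP'def]; module
    rw [this, Matrix.mul_sub, hPP']
  have hblkQ : (1 : Matrix (Fin m) (Fin m) ℂ) - Q⁻¹ * (conjMat Cm * Cmᵀ) = Q' * Q⁻¹ := by
    rw [← hQswap]
    have : Q' = Q - conjMat Cm * Cmᵀ := by rw [hQdef, hQ'def]; module
    rw [this, Matrix.mul_sub, hQQ']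
  -- assemble
  show (1 : Matrix (Fin m ⊕ Fin m) (Fin m ⊕ Fin m) ℂ) - C * A⁻¹ * Cf =
    fromBlocks (P' * P⁻¹) 0 0 (Q' * Q⁻¹)
  rw [hCA, Matrix.mul_assoc, hCCf]
  rw [show (1 : Matrix (Fin m ⊕ Fin m) (Fin m ⊕ Fin m) ℂ) = fromBlocks 1 0 0 1 from
    fromBlocks_one.symm]
  rw [fromBlocks_multiply, fromBlocks_sub']
  simp [hblkP, hblkQ]
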